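/- Let Ω_1, Ω_2 ⊆ ℝ^N be two disjoint nonempty open sets and let 1 ≤ q < N/(N-1). Then λ_{1,q}(Ω_1 ∪ Ω_2) = min{ λ_{1,q}(Ω_1), λ_{1,q}(Ω_2) }. -/

import Mathlib

open MeasureTheory Set Filter
open scoped ENNReal

noncomputable section

/-- `E` has smooth boundary: near each boundary point, `E` is the sublevel set of a smooth
function with non-vanishing differential. -/
def HasSmoothBoundary {N : ℕ} (E : Set (EuclideanSpace ℝ (Fin N))) : Prop :=
  ∀ x ∈ frontier E, ∃ U : Set (EuclideanSpace ℝ (Fin N)), IsOpen U ∧ x ∈ U ∧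
    ∃ f : EuclideanSpace ℝ (Fin N) → ℝ, ContDiff ℝ (⊤ : ℕ∞) f ∧
      (∀ y ∈ U, (y ∈ E ↔ f y < 0)) ∧ (∀ y ∈ U, fderiv ℝ f y ≠ 0)

/-- The ratio `H^{N-1}(∂E) / |E|^{1/q}`. -/
def cheegerRatio {N : ℕ} (q : ℝ) (E : Set (EuclideanSpace ℝ (Fin N))) : ℝ :=
  (MeasureTheory.Measure.hausdorffMeasure ((N : ℝ) - 1) (frontier E)).toReal /
    (volume E).toReal ^ (1 / q)

/-- The generalized Cheeger constant `h_q(Ω)`. -/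
def cheeger {N : ℕ} (q : ℝ) (Ω : Set (EuclideanSpace ℝ (Fin N))) : ℝ :=
  sInf { r : ℝ | ∃ E : Set (EuclideanSpace ℝ (Fin N)), IsOpen E ∧ E.Nonempty ∧
    IsCompact (closure E) ∧ closure E ⊆ Ω ∧ HasSmoothBoundary E ∧ r = cheegerRatio q E }

/-- The sharp Poincaré–Sobolev constant `λ_{p,q}(Ω)`. -/
def poincare {N : ℕ} (p q : ℝ) (Ω : Set (EuclideanSpace ℝ (Fin N))) : ℝ :=
  sInf { r : ℝ | ∃ u : EuclideanSpace ℝ (Fin N) → ℝ, ContDiff ℝ (⊤ : ℕ∞) u ∧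
    HasCompactSupport u ∧ tsupport u ⊆ Ω ∧
    (∫ x in Ω, |u x| ^ q) = 1 ∧ r = ∫ x in Ω, ‖fderiv ℝ u x‖ ^ p }

/-- The inradius of `Ω`, as an extended nonnegative real. -/
def einradius {N : ℕ} (Ω : Set (EuclideanSpace ℝ (Fin N))) : ℝ≥0∞ :=
  ⨆ x ∈ Ω, EMetric.infEdist x Ωᶜ

/-- The inradius of `Ω`, as a real number. -/
def inradius {N : ℕ} (Ω : Set (EuclideanSpace ℝ (Fin N))) : ℝ :=
  (einradius Ω).toReal

/-- The high ridge set of `Ω`. -/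
def highRidge {N : ℕ} (Ω : Set (EuclideanSpace ℝ (Fin N))) : Set (EuclideanSpace ℝ (Fin N)) :=
  {x ∈ Ω | Metric.ball x (inradius Ω) ⊆ Ω}

/-- The volume of the unit ball of `ℝ^N`. -/
def ballVol (N : ℕ) : ℝ :=
  (volume (Metric.ball (0 : EuclideanSpace ℝ (Fin N)) 1)).toReal

/-!
Cutting a test function `u` on `Ω₁ ∪ Ω₂` along the two components gives test functions
`uᵢ = 1_{Ωᵢ} u` (smooth because the components are open and disjoint), and both `∫ |u|^q` and
`∫ |∇u|` split accordingly. By homogeneity, `λ(Ωᵢ) aᵢ^(1/q) ≤ ∫ |∇uᵢ|` with `aᵢ = ∫ |uᵢ|^q`; since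
`a₁ + a₂ = 1` and `t ↦ t^(1/q)` is concave for `q ≥ 1`, `a₁^(1/q) + a₂^(1/q) ≥ 1`, so
`∫ |∇u| ≥ min λ(Ω₁) λ(Ω₂)`. The reverse inequality is the monotonicity of `λ` under inclusion.
-/

theorem norm_add_rpow_of_eq_zero_or {F : Type*} [SeminormedAddGroup F] {p : ℝ} (hp : p ≠ 0)
    {a b : F} (h : a = 0 ∨ b = 0) : ‖a + b‖ ^ p = ‖a‖ ^ p + ‖b‖ ^ p := by
  rcases h with rfl | rfl <;> simp [Real.zero_rpow hp]

theorem integral_norm_add_rpow_of_disjoint_support {α F : Type*} [MeasurableSpace α]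
    {μ : Measure α} [NormedAddCommGroup F] {p : ℝ} (hp : p ≠ 0) {f g : α → F}
    (hfg : Disjoint (Function.support f) (Function.support g))
    (hf : Integrable (fun x => ‖f x‖ ^ p) μ) (hg : Integrable (fun x => ‖g x‖ ^ p) μ) :
    ∫ x, ‖f x + g x‖ ^ p ∂μ = ∫ x, ‖f x‖ ^ p ∂μ + ∫ x, ‖g x‖ ^ p ∂μ := by
  rw [← integral_add hf hg]
  refine integral_congr_ae (Eventually.of_forall fun x => norm_add_rpow_of_eq_zero_or hp ?_)
  by_contra! h
  exact disjoint_left.1 hfg h.1 h.2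

theorem Continuous.integrable_norm_rpow_of_hasCompactSupport {X F : Type*} [TopologicalSpace X]
    [MeasurableSpace X] [OpensMeasurableSpace X] {μ : Measure X} [IsFiniteMeasureOnCompacts μ]
    [NormedAddCommGroup F] {f : X → F} {p : ℝ} (hf : Continuous f) (hcs : HasCompactSupport f)
    (hp : 0 < p) : Integrable (fun x => ‖f x‖ ^ p) μ :=
  (hf.norm.rpow_const fun _ => Or.inr hp.le).integrable_of_hasCompactSupport
    (hcs.comp_left (g := fun y : F => ‖y‖ ^ p) (by simp [Real.zero_rpow hp.ne']))

theorem min_le_mul_rpow_add_mul_rpow {l₁ l₂ a₁ a₂ s : ℝ} (hl₁ : 0 ≤ l₁) (hl₂ : 0 ≤ l₂)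
    (ha₁ : 0 ≤ a₁) (ha₂ : 0 ≤ a₂) (ha : a₁ + a₂ = 1) (hs₀ : 0 ≤ s) (hs₁ : s ≤ 1) :
    min l₁ l₂ ≤ l₁ * a₁ ^ s + l₂ * a₂ ^ s := by
  have hconcave : 1 ≤ a₁ ^ s + a₂ ^ s := by
    simpa [ha] using Real.rpow_add_le_add_rpow ha₁ ha₂ hs₀ hs₁
  have hm : 0 ≤ min l₁ l₂ := le_min hl₁ hl₂
  calc min l₁ l₂ ≤ min l₁ l₂ * (a₁ ^ s + a₂ ^ s) := le_mul_of_one_le_right hm hconcave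
    _ = min l₁ l₂ * a₁ ^ s + min l₁ l₂ * a₂ ^ s := mul_add _ _ _
    _ ≤ l₁ * a₁ ^ s + l₂ * a₂ ^ s := by
      gcongr
      exacts [min_le_left _ _, min_le_right _ _]

theorem tsupport_indicator_subset_of_tsupport_subset_union {E F : Type*} [TopologicalSpace E]
    [Zero F] {s t : Set E} {u : E → F} (ht : IsOpen t) (hst : Disjoint s t)
    (hu : tsupport u ⊆ s ∪ t) : tsupport (s.indicator u) ⊆ s := by
  have hclosed : IsClosed (tsupport u ∩ tᶜ) := (isClosed_tsupport u).inter ht.isClosed_compl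
  refine (closure_minimal (fun x hx => ?_) hclosed).trans fun x hx => (hu hx.1).resolve_right hx.2
  rw [support_indicator] at hx
  exact ⟨subset_tsupport u hx.2, disjoint_left.1 hst hx.1⟩

theorem ContDiff.indicator_of_tsupport_subset_union {E F : Type*} [NormedAddCommGroup E]
    [NormedSpace ℝ E] [NormedAddCommGroup F] [NormedSpace ℝ F] {n : WithTop ℕ∞} {s t : Set E}
    {u : E → F} (hs : IsOpen s) (ht : IsOpen t) (hst : Disjoint s t) (hu : ContDiff ℝ n u)
    (hsupp : tsupport u ⊆ s ∪ t) : ContDiff ℝ n (s.indicator u) := by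
  refine contDiff_iff_contDiffAt.2 fun x => ?_
  by_cases hx : x ∈ s
  · exact hu.contDiffAt.congr_of_eventuallyEq
      (eventually_of_mem (hs.mem_nhds hx) fun y hy => indicator_of_mem hy u)
  · have hx' : x ∉ tsupport (s.indicator u) :=
      fun h => hx (tsupport_indicator_subset_of_tsupport_subset_union ht hst hsupp h)
    exact contDiffAt_const.congr_of_eventuallyEq (notMem_tsupport_iff_eventuallyEq.1 hx')

section TestFunction

variable {E : Type*} [NormedAddCommGroup E] [NormedSpace ℝ E] {Ω Ω' s t : Set E} {u : E → ℝ}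

/-- `u ∈ C^∞_c(Ω)`. -/
def IsTestFunctionOn (Ω : Set E) (u : E → ℝ) : Prop :=
  ContDiff ℝ (⊤ : ℕ∞) u ∧ HasCompactSupport u ∧ tsupport u ⊆ Ω

theorem IsTestFunctionOn.mono (hu : IsTestFunctionOn Ω u) (h : Ω ⊆ Ω') :
    IsTestFunctionOn Ω' u :=
  ⟨hu.1, hu.2.1, hu.2.2.trans h⟩

theorem IsTestFunctionOn.const_smul (hu : IsTestFunctionOn Ω u) (c : ℝ) :
    IsTestFunctionOn Ω (c • u) :=
  ⟨hu.1.const_smul c, hu.2.1.smul_left, (tsupport_smul_subset_right (fun _ => c) u).trans hu.2.2⟩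

theorem IsTestFunctionOn.indicator (hs : IsOpen s) (ht : IsOpen t) (hst : Disjoint s t)
    (hu : IsTestFunctionOn (s ∪ t) u) : IsTestFunctionOn s (s.indicator u) :=
  ⟨hu.1.indicator_of_tsupport_subset_union hs ht hst hu.2.2,
    hu.2.1.mono' (support_indicator.trans_subset (inter_subset_right.trans (subset_tsupport u))),
    tsupport_indicator_subset_of_tsupport_subset_union ht hst hu.2.2⟩

theorem IsTestFunctionOn.indicator_add_indicator (hst : Disjoint s t)
    (hu : IsTestFunctionOn (s ∪ t) u) : s.indicator u + t.indicator u = u :=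
  (indicator_union_of_disjoint hst u).symm.trans
    (indicator_eq_self.2 ((subset_tsupport u).trans hu.2.2))

variable [MeasurableSpace E] [BorelSpace E] {μ : Measure E} [IsFiniteMeasureOnCompacts μ]
  {p : ℝ}

theorem IsTestFunctionOn.integrable_norm_rpow (hu : IsTestFunctionOn Ω u) (hp : 0 < p) :
    Integrable (fun x => ‖u x‖ ^ p) μ :=
  hu.1.continuous.integrable_norm_rpow_of_hasCompactSupport hu.2.1 hp

theorem IsTestFunctionOn.integrable_norm_fderiv_rpow (hu : IsTestFunctionOn Ω u) (hp : 0 < p) :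
    Integrable (fun x => ‖fderiv ℝ u x‖ ^ p) μ :=
  (hu.1.continuous_fderiv (by simp)).integrable_norm_rpow_of_hasCompactSupport
    (hu.2.1.fderiv ℝ) hp

theorem IsTestFunctionOn.integral_norm_rpow_eq_add (hs : IsOpen s) (ht : IsOpen t)
    (hst : Disjoint s t) (hu : IsTestFunctionOn (s ∪ t) u) (hp : 0 < p) :
    ∫ x, ‖u x‖ ^ p ∂μ = ∫ x, ‖s.indicator u x‖ ^ p ∂μ + ∫ x, ‖t.indicator u x‖ ^ p ∂μ := by
  have hu₁ := hu.indicator hs ht hst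
  have hu₂ := (hu.mono (union_comm s t).subset).indicator ht hs hst.symm
  conv_lhs => rw [← hu.indicator_add_indicator hst]
  exact integral_norm_add_rpow_of_disjoint_support hp.ne'
    (hst.mono ((subset_tsupport _).trans hu₁.2.2) ((subset_tsupport _).trans hu₂.2.2))
    (hu₁.integrable_norm_rpow hp) (hu₂.integrable_norm_rpow hp)

theorem IsTestFunctionOn.integral_norm_fderiv_rpow_eq_add (hs : IsOpen s) (ht : IsOpen t)
    (hst : Disjoint s t) (hu : IsTestFunctionOn (s ∪ t) u) (hp : 0 < p) :
    ∫ x, ‖fderiv ℝ u x‖ ^ p ∂μ =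
      ∫ x, ‖fderiv ℝ (s.indicator u) x‖ ^ p ∂μ + ∫ x, ‖fderiv ℝ (t.indicator u) x‖ ^ p ∂μ := by
  have hu₁ := hu.indicator hs ht hst
  have hu₂ := (hu.mono (union_comm s t).subset).indicator ht hs hst.symm
  have hfderiv : fderiv ℝ u = fderiv ℝ (s.indicator u) + fderiv ℝ (t.indicator u) := by
    ext1 x
    conv_lhs => rw [← hu.indicator_add_indicator hst]
    exact fderiv_add (hu₁.1.differentiable (by simp) x) (hu₂.1.differentiable (by simp) x)
  rw [hfderiv]
  exact integral_norm_add_rpow_of_disjoint_support hp.ne'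
    (hst.mono ((support_fderiv_subset ℝ).trans hu₁.2.2) ((support_fderiv_subset ℝ).trans hu₂.2.2))
    (hu₁.integrable_norm_fderiv_rpow hp) (hu₂.integrable_norm_fderiv_rpow hp)

end TestFunction

section Poincare

variable {N : ℕ} {p q : ℝ} {Ω Ω₁ Ω₂ : Set (EuclideanSpace ℝ (Fin N))}
  {u : EuclideanSpace ℝ (Fin N) → ℝ}

/-- The energies admissible in `poincare`, with the integrals over `Ω` taken over the whole space
instead: the two agree because test functions on `Ω` vanish, with their derivative, off `Ω`. -/
def poincareSet (p q : ℝ) (Ω : Set (EuclideanSpace ℝ (Fin N))) : Set ℝ :=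
  {r | ∃ u, IsTestFunctionOn Ω u ∧ ∫ x, |u x| ^ q = 1 ∧ r = ∫ x, ‖fderiv ℝ u x‖ ^ p}

theorem poincare_eq_sInf_poincareSet (hp : p ≠ 0) (hq : q ≠ 0) :
    poincare p q Ω = sInf (poincareSet p q Ω) := by
  refine congrArg sInf (Set.ext fun r => exists_congr fun u => ?_)
  simp only [IsTestFunctionOn, and_assoc]
  refine and_congr_right fun _ => and_congr_right fun _ => and_congr_right fun hΩ => ?_
  have hu : ∀ x ∉ Ω, u x = 0 := fun x hx => image_eq_zero_of_notMem_tsupport (hx <| hΩ ·)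
  have hdu : ∀ x ∉ Ω, fderiv ℝ u x = 0 := fun x hx =>
    Function.notMem_support.1 (hx <| hΩ <| support_fderiv_subset ℝ ·)
  rw [setIntegral_eq_integral_of_forall_compl_eq_zero fun x hx => by simp [hu x hx, hq],
    setIntegral_eq_integral_of_forall_compl_eq_zero fun x hx => by simp [hdu x hx, hp]]

theorem poincare_nonneg : 0 ≤ poincare p q Ω :=
  Real.sInf_nonneg fun _ ⟨_, _, _, _, _, hr⟩ =>
    hr ▸ integral_nonneg fun _ => Real.rpow_nonneg (norm_nonneg _) p

theorem poincareSet_mono (h : Ω₁ ⊆ Ω₂) : poincareSet p q Ω₁ ⊆ poincareSet p q Ω₂ :=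
  fun _ ⟨u, hu, hnorm, hr⟩ => ⟨u, hu.mono h, hnorm, hr⟩

theorem nonneg_of_mem_poincareSet {r : ℝ} (hr : r ∈ poincareSet p q Ω) : 0 ≤ r := by
  obtain ⟨u, -, -, rfl⟩ := hr
  exact integral_nonneg fun x => Real.rpow_nonneg (norm_nonneg _) p

theorem bddBelow_poincareSet : BddBelow (poincareSet p q Ω) :=
  ⟨0, fun _ => nonneg_of_mem_poincareSet⟩

theorem integral_abs_smul_rpow {c : ℝ} (hc : 0 ≤ c) :
    ∫ x, |(c • u) x| ^ q = c ^ q * ∫ x, |u x| ^ q := by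
  simp only [Pi.smul_apply, smul_eq_mul, abs_mul, abs_of_nonneg hc,
    Real.mul_rpow hc (abs_nonneg _), integral_const_mul]

theorem integral_norm_fderiv_smul_rpow {c : ℝ} (hc : 0 ≤ c) :
    ∫ x, ‖fderiv ℝ (c • u) x‖ ^ p = c ^ p * ∫ x, ‖fderiv ℝ u x‖ ^ p := by
  simp only [fderiv_const_smul_field, Pi.smul_apply, norm_smul, Real.norm_of_nonneg hc,
    Real.mul_rpow hc (norm_nonneg _), integral_const_mul]

/-- The witness is `a^(-1/q) • u`, where `a = ∫ |u|^q`. -/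
theorem IsTestFunctionOn.mem_poincareSet_of_integral_pos (hu : IsTestFunctionOn Ω u)
    (hq : 0 < q) (ha : 0 < ∫ x, |u x| ^ q) :
    (∫ x, |u x| ^ q) ^ (-(p / q)) * ∫ x, ‖fderiv ℝ u x‖ ^ p ∈ poincareSet p q Ω := by
  set a := ∫ x, |u x| ^ q
  have hc : 0 ≤ a ^ (-(1 / q)) := Real.rpow_nonneg ha.le _
  refine ⟨a ^ (-(1 / q)) • u, hu.const_smul _, ?_, ?_⟩
  · rw [integral_abs_smul_rpow hc, ← Real.rpow_mul ha.le, neg_mul, one_div,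
      inv_mul_cancel₀ hq.ne', Real.rpow_neg_one, inv_mul_cancel₀ ha.ne']
  · rw [integral_norm_fderiv_smul_rpow hc, ← Real.rpow_mul ha.le, neg_mul, one_div_mul_eq_div]

theorem poincareSet_nonempty (hq : 0 < q) (hΩ : IsOpen Ω) (hne : Ω.Nonempty) :
    (poincareSet p q Ω).Nonempty := by
  obtain ⟨c, hc⟩ := hne
  obtain ⟨ρ, hρ, hball⟩ := Metric.isOpen_iff.1 hΩ c hc
  let f : ContDiffBump c := ⟨ρ / 4, ρ / 2, by positivity, by linarith⟩
  have hf : IsTestFunctionOn Ω f := ⟨f.contDiff, f.hasCompactSupport, ?_⟩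
  · refine ⟨_, hf.mem_poincareSet_of_integral_pos hq ?_⟩
    refine Continuous.integral_pos_of_hasCompactSupport_nonneg_nonzero (x := c)
      (f.continuous.abs.rpow_const fun _ => Or.inr hq.le) ?_ (fun x => by positivity)
      (by simp [f.one_of_mem_closedBall (Metric.mem_closedBall_self (by positivity))])
    exact f.hasCompactSupport.comp_left (g := fun y : ℝ => |y| ^ q) (by simp [hq.ne'])
  · rw [f.tsupport_eq]
    exact (Metric.closedBall_subset_ball (half_lt_self hρ)).trans hball

theorem IsTestFunctionOn.poincare_mul_le (hu : IsTestFunctionOn Ω u) (hp : 0 < p) (hq : 0 < q) :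
    poincare p q Ω * (∫ x, |u x| ^ q) ^ (p / q) ≤ ∫ x, ‖fderiv ℝ u x‖ ^ p := by
  rcases (integral_nonneg fun x => Real.rpow_nonneg (abs_nonneg (u x)) q :
    0 ≤ ∫ x, |u x| ^ q).eq_or_lt with ha | ha
  · rw [← ha, Real.zero_rpow (div_pos hp hq).ne', mul_zero]
    exact integral_nonneg fun x => Real.rpow_nonneg (norm_nonneg _) p
  · have hmem := hu.mem_poincareSet_of_integral_pos hq ha (p := p)
    have hle := csInf_le bddBelow_poincareSet hmem
    rw [← poincare_eq_sInf_poincareSet hp.ne' hq.ne', Real.rpow_neg ha.le] at hle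
    rwa [mul_comm, ← le_inv_mul_iff₀ (Real.rpow_pos_of_pos ha _)]

theorem poincare_anti (hp : 0 < p) (hq : 0 < q) (hΩ₁ : IsOpen Ω₁) (hne : Ω₁.Nonempty)
    (h : Ω₁ ⊆ Ω₂) : poincare p q Ω₂ ≤ poincare p q Ω₁ := by
  rw [poincare_eq_sInf_poincareSet hp.ne' hq.ne', poincare_eq_sInf_poincareSet hp.ne' hq.ne']
  exact csInf_le_csInf bddBelow_poincareSet (poincareSet_nonempty hq hΩ₁ hne)
    (poincareSet_mono h)

theorem IsTestFunctionOn.min_poincare_le (hΩ₁ : IsOpen Ω₁) (hΩ₂ : IsOpen Ω₂)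
    (hdisj : Disjoint Ω₁ Ω₂) (hu : IsTestFunctionOn (Ω₁ ∪ Ω₂) u) (hq : 1 ≤ q)
    (hnorm : ∫ x, |u x| ^ q = 1) :
    min (poincare 1 q Ω₁) (poincare 1 q Ω₂) ≤ ∫ x, ‖fderiv ℝ u x‖ ^ (1 : ℝ) := by
  have hq₀ : 0 < q := one_pos.trans_le hq
  have hu₁ := hu.indicator hΩ₁ hΩ₂ hdisj
  have hu₂ := (hu.mono (union_comm _ _).subset).indicator hΩ₂ hΩ₁ hdisj.symm
  have hsplit := hu.integral_norm_rpow_eq_add hΩ₁ hΩ₂ hdisj hq₀ (μ := volume)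
  simp only [Real.norm_eq_abs, hnorm] at hsplit
  calc min (poincare 1 q Ω₁) (poincare 1 q Ω₂)
      ≤ poincare 1 q Ω₁ * (∫ x, |Ω₁.indicator u x| ^ q) ^ (1 / q) +
          poincare 1 q Ω₂ * (∫ x, |Ω₂.indicator u x| ^ q) ^ (1 / q) :=
        min_le_mul_rpow_add_mul_rpow poincare_nonneg poincare_nonneg
          (integral_nonneg fun _ => by positivity) (integral_nonneg fun _ => by positivity)
          hsplit.symm (by positivity) ((div_le_one hq₀).2 hq)
    _ ≤ (∫ x, ‖fderiv ℝ (Ω₁.indicator u) x‖ ^ (1 : ℝ)) +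
          ∫ x, ‖fderiv ℝ (Ω₂.indicator u) x‖ ^ (1 : ℝ) :=
        add_le_add (hu₁.poincare_mul_le one_pos hq₀) (hu₂.poincare_mul_le one_pos hq₀)
    _ = ∫ x, ‖fderiv ℝ u x‖ ^ (1 : ℝ) :=
        (hu.integral_norm_fderiv_rpow_eq_add hΩ₁ hΩ₂ hdisj one_pos).symm

end Poincare

theorem statement_6_general (N : ℕ) (Ω₁ Ω₂ : Set (EuclideanSpace ℝ (Fin N)))
    (h₁ : IsOpen Ω₁) (h₂ : IsOpen Ω₂) (hne₁ : Ω₁.Nonempty) (hne₂ : Ω₂.Nonempty)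
    (hdisj : Disjoint Ω₁ Ω₂) (q : ℝ) (hq : 1 ≤ q) :
    poincare 1 q (Ω₁ ∪ Ω₂) = min (poincare 1 q Ω₁) (poincare 1 q Ω₂) := by
  have hq₀ : 0 < q := one_pos.trans_le hq
  refine le_antisymm (le_min ?_ ?_) ?_
  · exact poincare_anti one_pos hq₀ h₁ hne₁ subset_union_left
  · exact poincare_anti one_pos hq₀ h₂ hne₂ subset_union_right
  rw [poincare_eq_sInf_poincareSet (Ω := Ω₁ ∪ Ω₂) one_ne_zero hq₀.ne']
  refine le_csInf (poincareSet_nonempty hq₀ (h₁.union h₂) (hne₁.mono subset_union_left)) ?_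
  rintro _ ⟨u, hu, hnorm, rfl⟩
  exact hu.min_poincare_le h₁ h₂ hdisj hq hnorm

/-- for disjoint nonempty open sets and `1 ≤ q < N/(N-1)`,
`λ_{1,q}(Ω₁ ∪ Ω₂) = min (λ_{1,q}(Ω₁)) (λ_{1,q}(Ω₂))`. -/
theorem statement_6 (N : ℕ) (Ω₁ Ω₂ : Set (EuclideanSpace ℝ (Fin N)))
    (h₁ : IsOpen Ω₁) (h₂ : IsOpen Ω₂) (hne₁ : Ω₁.Nonempty) (hne₂ : Ω₂.Nonempty)
    (hdisj : Disjoint Ω₁ Ω₂) (q : ℝ) (hq : 1 ≤ q) (hq' : q * ((N : ℝ) - 1) < N) :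
    poincare 1 q (Ω₁ ∪ Ω₂) = min (poincare 1 q Ω₁) (poincare 1 q Ω₂) :=
  statement_6_general N Ω₁ Ω₂ h₁ h₂ hne₁ hne₂ hdisj q hq

end
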